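/- arXiv:1808.01588 — 2 statements merged into one kernel-verified Lean document; each statement's English description precedes it below -/
import Mathlib

section
/- Let τ be a countable language and 𝕂 a class of τ-structures closed under isomorphism. If 𝕂 is the class of all models of a ⩕-sentence, then 𝕂 is a PC'_Δ-class, and hence a PC_Δ-class. -/
universe u

open FirstOrder Language

namespace PaperCDH

variable {L : FirstOrder.Language.{u, u}}

/-- Infinitary `L_{ω₁ω}`-style formulas with free and bound variables indexed by `ℕ`,
including finitary connectives and countably infinite conjunctions and disjunctions. -/
inductive Linf (L : FirstOrder.Language.{u, u}) : Type u where
  | fls : Linf L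
  | equal : L.Term ℕ → L.Term ℕ → Linf L
  | rel : {n : ℕ} → L.Relations n → (Fin n → L.Term ℕ) → Linf L
  | not : Linf L → Linf L
  | and : Linf L → Linf L → Linf L
  | or : Linf L → Linf L → Linf L
  | ex : ℕ → Linf L → Linf L
  | all : ℕ → Linf L → Linf L
  | iConj : (ℕ → Linf L) → Linf L
  | iDisj : (ℕ → Linf L) → Linf L

namespace Linf

/-- The set of free variables of an infinitary formula. -/
def freeVars : Linf L → Set ℕ
  | .fls => ∅
  | .equal t u => ↑(t.varFinset ∪ u.varFinset)
  | .rel _ ts => ⋃ i, ↑((ts i).varFinset)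
  | .not φ => φ.freeVars
  | .and φ ψ => φ.freeVars ∪ ψ.freeVars
  | .or φ ψ => φ.freeVars ∪ ψ.freeVars
  | .ex i φ => φ.freeVars \ {i}
  | .all i φ => φ.freeVars \ {i}
  | .iConj f => ⋃ n, (f n).freeVars
  | .iDisj f => ⋃ n, (f n).freeVars

/-- Satisfaction of an infinitary formula in an `L`-structure, relative to a
valuation of the variables. -/
def Realize {M : Type u} [L.Structure M] : Linf L → (ℕ → M) → Prop
  | .fls, _ => False
  | .equal t u, v => t.realize v = u.realize v
  | .rel R ts, v => Structure.RelMap R fun i => (ts i).realize v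
  | .not φ, v => ¬ φ.Realize v
  | .and φ ψ, v => φ.Realize v ∧ ψ.Realize v
  | .or φ ψ, v => φ.Realize v ∨ ψ.Realize v
  | .ex i φ, v => ∃ a : M, φ.Realize (Function.update v i a)
  | .all i φ, v => ∀ a : M, φ.Realize (Function.update v i a)
  | .iConj f, v => ∀ n, (f n).Realize v
  | .iDisj f, v => ∃ n, (f n).Realize v

/-- A (nonempty) structure satisfies a sentence if it is realized under every
(equivalently, some) valuation. -/
def Sat (M : Type u) [L.Structure M] (φ : Linf L) : Prop :=
  ∀ v : ℕ → M, φ.Realize v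

/-- Well-formed `L_{ω₁ω}`-formulas: at each infinitary conjunction or disjunction, the
conjuncts/disjuncts have finitely many free variables in total. -/
inductive WF : Linf L → Prop
  | fls : WF .fls
  | equal (t u : L.Term ℕ) : WF (.equal t u)
  | rel {n : ℕ} (R : L.Relations n) (ts : Fin n → L.Term ℕ) : WF (.rel R ts)
  | not {φ} : WF φ → WF (.not φ)
  | and {φ ψ} : WF φ → WF ψ → WF (.and φ ψ)
  | or {φ ψ} : WF φ → WF ψ → WF (.or φ ψ)
  | ex {φ} (i : ℕ) : WF φ → WF (.ex i φ)
  | all {φ} (i : ℕ) : WF φ → WF (.all i φ)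
  | iConj {f : ℕ → Linf L} : (∀ n, WF (f n)) → (⋃ n, (f n).freeVars).Finite → WF (.iConj f)
  | iDisj {f : ℕ → Linf L} : (∀ n, WF (f n)) → (⋃ n, (f n).freeVars).Finite → WF (.iDisj f)

/-- Finitary quantifier-free formulas. -/
inductive QF : Linf L → Prop
  | fls : QF .fls
  | equal (t u : L.Term ℕ) : QF (.equal t u)
  | rel {n : ℕ} (R : L.Relations n) (ts : Fin n → L.Term ℕ) : QF (.rel R ts)
  | not {φ} : QF φ → QF (.not φ)
  | and {φ ψ} : QF φ → QF ψ → QF (.and φ ψ)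
  | or {φ ψ} : QF φ → QF ψ → QF (.or φ ψ)

/-- The `⩕`-formulas: built from finitary quantifier-free formulas by quantification
and countable conjunctions (of families with finitely many free variables in total),
with no infinitary disjunctions. -/
inductive IsWedge : Linf L → Prop
  | qf {φ} : QF φ → IsWedge φ
  | ex {φ} (i : ℕ) : IsWedge φ → IsWedge (.ex i φ)
  | all {φ} (i : ℕ) : IsWedge φ → IsWedge (.all i φ)
  | iConj {f : ℕ → Linf L} : (∀ n, IsWedge (f n)) → (⋃ n, (f n).freeVars).Finite →
      IsWedge (.iConj f)

end Linf

/-- A class of `L`-structures (in universe `u`), given as a predicate on structures. -/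
def StructClass (L : FirstOrder.Language.{u, u}) : Type (u + 1) :=
  ∀ (M : Type u), L.Structure M → Prop

/-- A class of structures is closed under isomorphism. -/
def ClosedUnderIso (K : StructClass L) : Prop :=
  ∀ (M N : Type u) (iM : L.Structure M) (iN : L.Structure N),
    Nonempty M → Nonempty (@FirstOrder.Language.Equiv L M N iM iN) → (K M iM ↔ K N iN)

/-- `K` is the class of all models of the `L_{ω₁ω}`-sentence `φ`
(among nonempty structures). -/
def Axiomatizes (φ : Linf L) (K : StructClass L) : Prop :=
  φ.WF ∧ φ.freeVars = ∅ ∧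
    ∀ (M : Type u) (iM : L.Structure M), Nonempty M → (K M iM ↔ @Linf.Sat L M iM φ)

/-- `K` is `L_{ω₁ω}`-elementary: the class of all models of a single
`L_{ω₁ω}`-sentence. -/
def IsLw1wElementary (K : StructClass L) : Prop :=
  ∃ φ : Linf L, Axiomatizes φ K

/-- `K` is the class of all models of a single `⩕`-sentence. -/
def IsWedgeElementary (K : StructClass L) : Prop :=
  ∃ φ : Linf L, φ.IsWedge ∧ φ.freeVars = ∅ ∧
    ∀ (M : Type u) (iM : L.Structure M), Nonempty M → (K M iM ↔ @Linf.Sat L M iM φ)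

/-- `K` is a `PC_Δ`-class: there is an expansion `L.sum L'` of the language by (countably
many) new symbols and a first-order theory `T` in the expanded language such that the
members of `K` are exactly the structures admitting an expansion to a model of `T`. -/
def IsPCDelta (K : StructClass L) : Prop :=
  ∃ (L' : FirstOrder.Language.{u, u}), Countable L'.Symbols ∧
    ∃ T : (L.sum L').Theory,
      ∀ (M : Type u) (iM : L.Structure M), Nonempty M →
        (K M iM ↔ ∃ iM' : L'.Structure M,
          @Theory.Model (L.sum L') M (@FirstOrder.Language.sumStructure L L' M iM iM') T)

/-- `K` is a `PC`-class: as `IsPCDelta`, but with a single first-order sentence. -/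
def IsPC (K : StructClass L) : Prop :=
  ∃ (L' : FirstOrder.Language.{u, u}), Countable L'.Symbols ∧
    ∃ φ : (L.sum L').Sentence,
      ∀ (M : Type u) (iM : L.Structure M), Nonempty M →
        (K M iM ↔ ∃ iM' : L'.Structure M,
          @Sentence.Realize (L.sum L') M (@FirstOrder.Language.sumStructure L L' M iM iM') φ)

/-- The members of `K` are (up to isomorphism) exactly the structures of the form `A_P`:
the substructure of the `L`-reduct of `A` whose domain is the interpretation of the unary
predicate `P`, where `A` ranges over models of `T` for which this set is closed under the
interpretations of the function and constant symbols of `L`. -/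
def PCPrimeWitness (L' : FirstOrder.Language.{u, u}) (P : L'.Relations 1)
    (T : Set ((L.sum L').Sentence)) (K : StructClass L) : Prop :=
  ∀ (M : Type u) (iM : L.Structure M), Nonempty M →
    (K M iM ↔ ∃ (A : Type u) (iA : (L.sum L').Structure A),
      @Theory.Model (L.sum L') A iA T ∧
      ∃ S : @Substructure L A (@LHom.reduct L (L.sum L') LHom.sumInl A iA),
        ((S : Set A) = {a | @Structure.RelMap (L.sum L') A iA 1 (Sum.inr P) ![a]}) ∧
        Nonempty (@FirstOrder.Language.Equiv L M S iM
          (@Substructure.inducedStructure L A (@LHom.reduct L (L.sum L') LHom.sumInl A iA) S)))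

/-- `K` is a `PC'_Δ`-class. -/
def IsPCDelta' (K : StructClass L) : Prop :=
  ∃ (L' : FirstOrder.Language.{u, u}), Countable L'.Symbols ∧
    ∃ (P : L'.Relations 1) (T : (L.sum L').Theory), PCPrimeWitness L' P T K

/-- `K` is a `PC'`-class: as `IsPCDelta'` but with a single first-order sentence. -/
def IsPC' (K : StructClass L) : Prop :=
  ∃ (L' : FirstOrder.Language.{u, u}), Countable L'.Symbols ∧
    ∃ (P : L'.Relations 1) (φ : (L.sum L').Sentence), PCPrimeWitness L' P {φ} K

/-!
Give every subformula of the `⩕`-sentence `φ` a fresh relation symbol `R_ψ(x̄)` on its bound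
variables, and let `T` say that `R_φ` holds everywhere and that each `R_ψ` implies the one-step
unfolding of `ψ`: an existential becomes `∃ y, R_χ(y, x̄)`, a universal `∀ y, R_χ(y, x̄)`, a
countable conjunction the countably many axioms `R_ψ → R_{ψₙ}`, a quantifier-free `ψ` itself.
Since a `⩕`-formula has no infinitary disjunction, each such unfolding is first order. Interpreting
`R_ψ` by the set of tuples satisfying `ψ` expands every model of `φ` to a model of `T`; conversely
induction on `ψ` shows `R_ψ(x̄) → ψ(x̄)` in every model of `T`, so the reduct satisfies `φ`. Taking
`R_φ`, which `T` forces to be everything, as the predicate `P` gives the `PC'_Δ` presentation.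
-/

section Presentation

variable {L' : FirstOrder.Language.{u, u}}

theorem sumStructure_reduct {A : Type u} (iA : (L.sum L').Structure A) :
    @sumStructure L L' A ((LHom.sumInl : L →ᴸ L.sum L').reduct A)
      ((LHom.sumInr : L' →ᴸ L.sum L').reduct A) = iA := by
  ext n f x <;> cases f <;> rfl

theorem pcPrimeWitness_of_model_forall_relMap {K : StructClass L} (hK : ClosedUnderIso K)
    {P : L'.Relations 1} {T : (L.sum L').Theory}
    (hP : ∀ (A : Type u) [L.Structure A] [L'.Structure A], A ⊨ T →
      ∀ a : A, Structure.RelMap P ![a])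
    (hT : ∀ (M : Type u) (iM : L.Structure M), Nonempty M →
      (K M iM ↔ ∃ iM' : L'.Structure M,
        @Theory.Model (L.sum L') M (@sumStructure L L' M iM iM') T)) :
    PCPrimeWitness L' P T K := by
  intro M iM hM
  constructor
  · intro hKM
    obtain ⟨iM', hM'⟩ := (hT M iM hM).1 hKM
    refine ⟨M, _, hM', ⊤, ?_, ⟨Substructure.topEquiv.symm⟩⟩
    exact (Set.eq_univ_of_forall (hP M hM')).symm
  · rintro ⟨A, iA, hA, S, hS, ⟨e⟩⟩
    obtain ⟨iL, iL', rfl⟩ : ∃ iL iL', @sumStructure L L' A iL iL' = iA :=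
      ⟨_, _, sumStructure_reduct iA⟩
    have hS_top : S = ⊤ := SetLike.coe_injective (hS.trans (Set.eq_univ_of_forall (hP A hA)))
    subst hS_top
    obtain ⟨m⟩ := hM
    exact (hK M A iM iL ⟨m⟩ ⟨Substructure.topEquiv.comp e⟩).2 ((hT A iL ⟨e m⟩).2 ⟨iL', hA⟩)

end Presentation

theorem term_realize_eq_of_eqOn {M : Type u} [L.Structure M] (t : L.Term ℕ) {v w : ℕ → M}
    (h : Set.EqOn v w t.varFinset) : t.realize v = t.realize w := by
  induction t with
  | var i => exact h (by simp [Term.varFinset])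
  | func f ts ih =>
    refine congrArg (Structure.funMap f) (funext fun i => ih i fun j hj => h ?_)
    simpa [Term.varFinset] using ⟨i, hj⟩

namespace Linf

theorem realize_congr {M : Type u} [L.Structure M] (ψ : Linf L) {v w : ℕ → M}
    (h : Set.EqOn v w ψ.freeVars) : ψ.Realize v ↔ ψ.Realize w := by
  have update_eqOn : ∀ {s : Set ℕ} {v w : ℕ → M} (i : ℕ) (x : M), Set.EqOn v w (s \ {i}) →
      Set.EqOn (Function.update v i x) (Function.update w i x) s := by
    intro s v w i x h j hj
    by_cases hji : j = i
    · simp [hji]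
    · simpa [hji] using h ⟨hj, hji⟩
  induction ψ generalizing v w with
  | fls => rfl
  | equal t u =>
    simp only [freeVars, Finset.coe_union] at h
    simp only [Realize, term_realize_eq_of_eqOn t (h.mono Set.subset_union_left),
      term_realize_eq_of_eqOn u (h.mono Set.subset_union_right)]
  | rel R ts =>
    exact iff_of_eq (congrArg (Structure.RelMap R) (funext fun i => term_realize_eq_of_eqOn (ts i)
      (h.mono (Set.subset_iUnion (fun k => ((ts k).varFinset : Set ℕ)) i))))
  | not ψ ih => exact not_congr (ih h)
  | and ψ χ ihψ ihχ =>
    exact and_congr (ihψ (h.mono Set.subset_union_left)) (ihχ (h.mono Set.subset_union_right))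
  | or ψ χ ihψ ihχ =>
    exact or_congr (ihψ (h.mono Set.subset_union_left)) (ihχ (h.mono Set.subset_union_right))
  | ex i ψ ih => exact exists_congr fun x => ih (update_eqOn i x h)
  | all i ψ ih => exact forall_congr' fun x => ih (update_eqOn i x h)
  | iConj f ih =>
    exact forall_congr' fun n => ih n (h.mono (Set.subset_iUnion (fun k => (f k).freeVars) n))
  | iDisj f ih =>
    exact exists_congr fun n => ih n (h.mono (Set.subset_iUnion (fun k => (f k).freeVars) n))

def child (m : ℕ) : Linf L → Linf L
  | .ex _ ψ | .all _ ψ => ψ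
  | .iConj f => f m
  | ψ => ψ

/-- Addresses are read innermost step first: `m :: p` addresses the `m`-th child of the node at
`p`. -/
def subformulaAt (φ : Linf L) : List ℕ → Linf L
  | [] => φ
  | m :: p => child m (subformulaAt φ p)

def boundVarsAt (φ : Linf L) : List ℕ → List ℕ
  | [] => []
  | _ :: p =>
    match subformulaAt φ p with
    | .ex i _ | .all i _ => i :: boundVarsAt φ p
    | _ => boundVarsAt φ p

theorem IsWedge.child {ψ : Linf L} (h : ψ.IsWedge) (m : ℕ) : (Linf.child m ψ).IsWedge := by
  cases h with
  | qf h =>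
    have : Linf.child m ψ = ψ := by cases h <;> rfl
    rw [this]
    exact .qf h
  | ex _ h | all _ h => exact h
  | iConj h _ => exact h m

theorem IsWedge.subformulaAt {φ : Linf L} (h : φ.IsWedge) : ∀ p, (φ.subformulaAt p).IsWedge
  | [] => h
  | m :: p => (h.subformulaAt p).child m

/-- In context `c`, a tuple of length `c.length + 1` stores the value of a bound variable at the
slot of its innermost binder, the innermost binder of `c` taking the last slot; slot `0` is shared
by all variables not bound in `c`. -/
def varSlot : (c : List ℕ) → ℕ → Fin (c.length + 1)
  | [], _ => 0
  | i :: c, j => if j = i then Fin.last _ else (varSlot c j).castSucc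

theorem snoc_comp_varSlot_cons {M : Type u} (c : List ℕ) (i : ℕ) (a : Fin (c.length + 1) → M)
    (x : M) : (Fin.snoc a x : Fin ((i :: c).length + 1) → M) ∘ varSlot (i :: c) =
      Function.update (a ∘ varSlot c) i x := by
  funext j
  by_cases hj : j = i <;> simp [varSlot, hj]

def toBoundedFormula (c : List ℕ) : Linf L → L.BoundedFormula Empty (c.length + 1)
  | .equal t u => (t.relabel (Sum.inr ∘ varSlot c)).bdEqual (u.relabel (Sum.inr ∘ varSlot c))
  | .rel R ts => R.boundedFormula fun i => (ts i).relabel (Sum.inr ∘ varSlot c)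
  | .not ψ => (toBoundedFormula c ψ).not
  | .and ψ χ => toBoundedFormula c ψ ⊓ toBoundedFormula c χ
  | .or ψ χ => toBoundedFormula c ψ ⊔ toBoundedFormula c χ
  | _ => ⊥

theorem realize_toBoundedFormula {M : Type u} [L.Structure M] {ψ : Linf L} (h : ψ.QF)
    (c : List ℕ) (v : Empty → M) (a : Fin (c.length + 1) → M) :
    (ψ.toBoundedFormula c).Realize v a ↔ ψ.Realize (a ∘ varSlot c) := by
  induction h with
  | fls => simp [toBoundedFormula, Realize]
  | equal t u => simp [toBoundedFormula, Realize, Term.realize_relabel, Function.comp_def]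
  | rel R ts => simp [toBoundedFormula, Realize, Term.realize_relabel, Function.comp_def]
  | not _ ih => simp [toBoundedFormula, Realize, ih]
  | and _ _ ihψ ihχ => simp [toBoundedFormula, Realize, ihψ, ihχ]
  | or _ _ ihψ ihχ => simp [toBoundedFormula, Realize, ihψ, ihχ]

end Linf

/-- One relation symbol of every arity for each address of a subformula. -/
def subformulaLang : FirstOrder.Language.{u, u} where
  Functions _ := PEmpty
  Relations _ := ULift (List ℕ)

instance : Countable subformulaLang.{u}.Symbols :=
  inferInstanceAs (Countable ((Σ _ : ℕ, PEmpty.{u + 1}) ⊕ (Σ _ : ℕ, ULift.{u} (List ℕ))))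

def atomAt (p : List ℕ) (n : ℕ) : (L.sum subformulaLang.{u}).BoundedFormula Empty n :=
  Relations.boundedFormula (Sum.inr ⟨p⟩) fun s => Term.var (Sum.inr s)

abbrev RelAt {M : Type u} [subformulaLang.{u}.Structure M] (p : List ℕ) {n : ℕ} (a : Fin n → M) :
    Prop :=
  Structure.RelMap (L := subformulaLang.{u}) ⟨p⟩ a

namespace Linf

/-- `m` selects the conjunct when the node is a countable conjunction. -/
def unfoldAt (φ : Linf L) (p : List ℕ) (m : ℕ) :
    (L.sum subformulaLang.{u}).BoundedFormula Empty ((φ.boundVarsAt p).length + 1) :=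
  match φ.subformulaAt p with
  | .ex _ _ => (atomAt (0 :: p) _).ex
  | .all _ _ => (atomAt (0 :: p) _).all
  | .iConj _ => atomAt (m :: p) _
  | ψ => LHom.sumInl.onBoundedFormula (ψ.toBoundedFormula (φ.boundVarsAt p))

def nodeAxiom (φ : Linf L) (p : List ℕ) (m : ℕ) : (L.sum subformulaLang.{u}).Sentence :=
  ((atomAt p _).imp (φ.unfoldAt p m)).alls

def subformulaTheory (φ : Linf L) : (L.sum subformulaLang.{u}).Theory :=
  insert (atomAt [] 1).alls (Set.range fun pm : List ℕ × ℕ => φ.nodeAxiom pm.1 pm.2)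

section Unfolding

variable {M : Type u} [L.Structure M] [subformulaLang.{u}.Structure M]
  {φ ψ : Linf L} {p : List ℕ}

theorem realize_atomAt {n : ℕ} (v : Empty → M) (a : Fin n → M) :
    (atomAt (L := L) p n).Realize v a ↔ RelAt p a :=
  Iff.rfl

theorem realize_nodeAxiom {m : ℕ} :
    M ⊨ φ.nodeAxiom p m ↔
      ∀ a : Fin ((φ.boundVarsAt p).length + 1) → M, RelAt p a →
        (φ.unfoldAt p m).Realize default a := by
  simp [nodeAxiom, Sentence.Realize, realize_atomAt]

theorem realize_unfoldAt_of_eq_ex {i m : ℕ} (h : φ.subformulaAt p = .ex i ψ) {v : Empty → M}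
    {a : Fin ((φ.boundVarsAt p).length + 1) → M} :
    (φ.unfoldAt p m).Realize v a ↔ ∃ x, RelAt (0 :: p) (Fin.snoc a x) := by
  simp [unfoldAt, h, realize_atomAt]

theorem realize_unfoldAt_of_eq_all {i m : ℕ} (h : φ.subformulaAt p = .all i ψ) {v : Empty → M}
    {a : Fin ((φ.boundVarsAt p).length + 1) → M} :
    (φ.unfoldAt p m).Realize v a ↔ ∀ x, RelAt (0 :: p) (Fin.snoc a x) := by
  simp [unfoldAt, h, realize_atomAt]

theorem realize_unfoldAt_of_eq_iConj {f : ℕ → Linf L} {m : ℕ} (h : φ.subformulaAt p = .iConj f)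
    {v : Empty → M} {a : Fin ((φ.boundVarsAt p).length + 1) → M} :
    (φ.unfoldAt p m).Realize v a ↔ RelAt (m :: p) a := by
  simp [unfoldAt, h, realize_atomAt]

theorem realize_unfoldAt_of_qf {m : ℕ} (h : φ.subformulaAt p = ψ) (hψ : ψ.QF) {v : Empty → M}
    {a : Fin ((φ.boundVarsAt p).length + 1) → M} :
    (φ.unfoldAt p m).Realize v a ↔ ψ.Realize (a ∘ varSlot (φ.boundVarsAt p)) := by
  have : φ.unfoldAt p m = LHom.sumInl.onBoundedFormula (ψ.toBoundedFormula (φ.boundVarsAt p)) := by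
    cases hψ <;> simp [unfoldAt, h]
  rw [this, LHom.realize_onBoundedFormula, realize_toBoundedFormula hψ]

end Unfolding

/-- Relations whose arity does not fit the context of their address are junk. -/
@[reducible]
def canonicalExpansion (φ : Linf L) (M : Type u) [L.Structure M] :
    subformulaLang.{u}.Structure M where
  funMap f := PEmpty.elim f
  RelMap {n} q a :=
    if h : n = (φ.boundVarsAt q.down).length + 1 then
      (φ.subformulaAt q.down).Realize fun j => a (Fin.cast h.symm (varSlot _ j))
    else True

section Expansion

variable {M : Type u} [L.Structure M] {φ : Linf L}

def InterpretsSubformulas (φ : Linf L) (M : Type u) [L.Structure M]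
    [subformulaLang.{u}.Structure M] : Prop :=
  ∀ q c, φ.boundVarsAt q = c → ∀ a : Fin (c.length + 1) → M,
    RelAt q a ↔ (φ.subformulaAt q).Realize (a ∘ varSlot c)

theorem interpretsSubformulas_canonicalExpansion :
    @InterpretsSubformulas L φ M _ (φ.canonicalExpansion M) := by
  rintro q c rfl a
  show (if h : _ then _ else True) ↔ _
  rw [dif_pos rfl]
  rfl

variable [subformulaLang.{u}.Structure M]

theorem realize_unfoldAt_of_interpretsSubformulas (hR : φ.InterpretsSubformulas M) {p : List ℕ}
    (hW : (φ.subformulaAt p).IsWedge) (m : ℕ) (a : Fin ((φ.boundVarsAt p).length + 1) → M)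
    (ha : (φ.subformulaAt p).Realize (a ∘ varSlot (φ.boundVarsAt p))) :
    (φ.unfoldAt p m).Realize default a := by
  generalize hψ : φ.subformulaAt p = ψ at hW ha
  cases hW with
  | qf hq => exact (realize_unfoldAt_of_qf hψ hq).2 ha
  | ex i _ =>
    obtain ⟨x, hx⟩ := ha
    refine (realize_unfoldAt_of_eq_ex hψ).2 ⟨x, (hR (0 :: p) (i :: φ.boundVarsAt p) ?_ _).2 ?_⟩
    · simp [boundVarsAt, hψ]
    · simpa [subformulaAt, hψ, child, snoc_comp_varSlot_cons] using hx
  | all i _ =>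
    refine (realize_unfoldAt_of_eq_all hψ).2 fun x =>
      (hR (0 :: p) (i :: φ.boundVarsAt p) ?_ _).2 ?_
    · simp [boundVarsAt, hψ]
    · simpa [subformulaAt, hψ, child, snoc_comp_varSlot_cons] using ha x
  | iConj _ _ =>
    refine (realize_unfoldAt_of_eq_iConj hψ).2 ((hR (m :: p) (φ.boundVarsAt p) ?_ _).2 ?_)
    · simp [boundVarsAt, hψ]
    · simpa [subformulaAt, hψ, child] using ha m

theorem model_subformulaTheory (hW : φ.IsWedge) (hφ : Sat M φ) (hR : φ.InterpretsSubformulas M) :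
    M ⊨ φ.subformulaTheory := by
  refine (Theory.model_iff _).2 ?_
  rintro _ (rfl | ⟨⟨p, m⟩, rfl⟩)
  · simp only [Sentence.Realize, BoundedFormula.realize_alls, realize_atomAt]
    exact fun a => (hR [] [] rfl a).2 (hφ _)
  · exact realize_nodeAxiom.2 fun a ha =>
      realize_unfoldAt_of_interpretsSubformulas hR (hW.subformulaAt p) m a ((hR p _ rfl a).1 ha)

theorem relAt_nil_of_model (hT : M ⊨ φ.subformulaTheory) (a : Fin 1 → M) : RelAt [] a := by
  have htop := hT.realize_of_mem _ (Set.mem_insert _ _)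
  simp only [Sentence.Realize, BoundedFormula.realize_alls, realize_atomAt] at htop
  exact htop a

theorem realize_unfoldAt_of_model (hT : M ⊨ φ.subformulaTheory) {p : List ℕ} (m : ℕ)
    {a : Fin ((φ.boundVarsAt p).length + 1) → M} (ha : RelAt p a) :
    (φ.unfoldAt p m).Realize default a :=
  realize_nodeAxiom.1 (hT.realize_of_mem _ (Set.mem_insert_of_mem _ ⟨(p, m), rfl⟩)) a ha

theorem realize_of_relAt (hT : M ⊨ φ.subformulaTheory) {ψ : Linf L} (hψ : ψ.IsWedge)
    {p c : List ℕ} (hp : φ.subformulaAt p = ψ) (hc : φ.boundVarsAt p = c)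
    {a : Fin (c.length + 1) → M} (ha : RelAt p a) : ψ.Realize (a ∘ varSlot c) := by
  induction hψ generalizing p c with subst hc
  | qf hq => exact (realize_unfoldAt_of_qf hp hq).1 (realize_unfoldAt_of_model hT 0 ha)
  | ex i _ ih =>
    obtain ⟨x, hx⟩ := (realize_unfoldAt_of_eq_ex hp).1 (realize_unfoldAt_of_model hT 0 ha)
    refine ⟨x, ?_⟩
    rw [← snoc_comp_varSlot_cons]
    exact ih (by simp [subformulaAt, hp, child]) (by simp [boundVarsAt, hp]) hx
  | all i _ ih =>
    intro x
    rw [← snoc_comp_varSlot_cons]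
    exact ih (by simp [subformulaAt, hp, child]) (by simp [boundVarsAt, hp])
      ((realize_unfoldAt_of_eq_all hp).1 (realize_unfoldAt_of_model hT 0 ha) x)
  | iConj _ _ ih =>
    intro n
    exact ih n (by simp [subformulaAt, hp, child]) (by simp [boundVarsAt, hp])
      ((realize_unfoldAt_of_eq_iConj hp).1 (realize_unfoldAt_of_model hT n ha))

end Expansion

theorem sat_iff_exists_model_subformulaTheory {φ : Linf L} (hW : φ.IsWedge) (hfv : φ.freeVars = ∅)
    (M : Type u) (iM : L.Structure M) [Nonempty M] :
    Sat M φ ↔ ∃ iM' : subformulaLang.{u}.Structure M,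
      @Theory.Model _ M (@sumStructure _ _ M iM iM') φ.subformulaTheory := by
  constructor
  · intro hφ
    let _ := φ.canonicalExpansion M
    exact ⟨_, model_subformulaTheory hW hφ interpretsSubformulas_canonicalExpansion⟩
  · rintro ⟨iM', hT⟩ v
    obtain ⟨m⟩ := ‹Nonempty M›
    refine (realize_congr φ (hfv ▸ Set.eqOn_empty _ _)).1
      (realize_of_relAt hT hW rfl rfl (relAt_nil_of_model hT fun _ => m))

end Linf

theorem isPCDelta'_and_isPCDelta_of_wedgeElementary_general
    {L : FirstOrder.Language.{u, u}}
    (K : StructClass L) (hK : ClosedUnderIso K)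
    (h : IsWedgeElementary K) :
    IsPCDelta' K ∧ IsPCDelta K := by
  obtain ⟨φ, hW, hfv, hKφ⟩ := h
  have hT (M : Type u) (iM : L.Structure M) (hM : Nonempty M) :
      K M iM ↔ ∃ iM' : subformulaLang.{u}.Structure M,
        @Theory.Model _ M (@sumStructure _ _ M iM iM') φ.subformulaTheory :=
    (hKφ M iM hM).trans (Linf.sat_iff_exists_model_subformulaTheory hW hfv M iM)
  have hP (A : Type u) [L.Structure A] [subformulaLang.{u}.Structure A]
      (hA : A ⊨ φ.subformulaTheory) (a : A) : RelAt [] ![a] :=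
    Linf.relAt_nil_of_model hA ![a]
  exact ⟨⟨subformulaLang, inferInstance, ⟨[]⟩, φ.subformulaTheory,
      pcPrimeWitness_of_model_forall_relMap hK hP hT⟩,
    ⟨subformulaLang, inferInstance, φ.subformulaTheory, hT⟩⟩

/-- Let `τ` be a countable language and `𝕂` a class of `τ`-structures
closed under isomorphism. If `𝕂` is the class of all models of a `⩕`-sentence, then `𝕂`
is a `PC'_Δ`-class, and hence a `PC_Δ`-class. -/
theorem isPCDelta'_and_isPCDelta_of_wedgeElementary
    {L : FirstOrder.Language.{u, u}} [Countable L.Symbols]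
    (K : StructClass L) (hK : ClosedUnderIso K)
    (h : IsWedgeElementary K) :
    IsPCDelta' K ∧ IsPCDelta K :=
  isPCDelta'_and_isPCDelta_of_wedgeElementary_general K hK h

end PaperCDH
end

section
/- Let A = (A, R, g, …) be a τ*_tup-structure which is a model of T_tup whose M-sort equals the τ-structure 𝓜, and identify 𝓜^{<ℕ} with its canonical image in A. Let φ(x̄) be a Π₁ τ*_tup-formula and let ā be parameters from 𝓜^{<ℕ}. If A ⊨ φ(ā), then (𝓜^{<ℕ}, R∩ℕ, g restricted to ℕ × M^{<ℕ}) ⊨ φ(ā). -/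
universe u

open FirstOrder Language

namespace PaperCDH

/-! ### The three-sorted language `τ*_tup` of tuples, and its `Π₁` formulas -/

/-- A `τ*_tup`-structure: a three-sorted structure consisting of an `L`-structure sort
`M`, an arithmetic sort `N` (with `0`, `1`, `+`, `·`, `<`), and a tuple sort `Tup`,
together with a length function `len : Tup → N`, an indexing relation
`ind ⊆ Tup × N × M`, a unary relation `R` on `N`, and a function `g : N × Tup → M`. -/
structure TupStr (L : FirstOrder.Language.{0, 0}) : Type 1 where
  M : Type
  strM : L.Structure M
  N : Type
  zero : N
  one : N
  add : N → N → N
  mul : N → N → N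
  lt : N → N → Prop
  Tup : Type
  len : Tup → N
  ind : Tup → N → M → Prop
  R : N → Prop
  g : N → Tup → M

namespace TupStr

variable {L : FirstOrder.Language.{0, 0}}

/-- The arithmetic sort satisfies `PA⁻`: the (finitely axiomatized) theory of the
nonnegative parts of discretely ordered commutative rings. -/
structure IsPAminus (A : TupStr L) : Prop where
  add_assoc : ∀ x y z, A.add (A.add x y) z = A.add x (A.add y z)
  add_comm : ∀ x y, A.add x y = A.add y x
  add_zero : ∀ x, A.add x A.zero = x
  mul_assoc : ∀ x y z, A.mul (A.mul x y) z = A.mul x (A.mul y z)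
  mul_comm : ∀ x y, A.mul x y = A.mul y x
  mul_one : ∀ x, A.mul x A.one = x
  mul_zero : ∀ x, A.mul x A.zero = A.zero
  left_distrib : ∀ x y z, A.mul x (A.add y z) = A.add (A.mul x y) (A.mul x z)
  lt_irrefl : ∀ x, ¬ A.lt x x
  lt_trans : ∀ x y z, A.lt x y → A.lt y z → A.lt x z
  lt_total : ∀ x y, A.lt x y ∨ x = y ∨ A.lt y x
  add_lt_add_right : ∀ x y z, A.lt x y → A.lt (A.add x z) (A.add y z)
  mul_lt_mul_right : ∀ x y z, A.lt x y → A.lt A.zero z → A.lt (A.mul x z) (A.mul y z)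
  sub_exists : ∀ x y, (A.lt x y ∨ x = y) → ∃ z, A.add x z = y
  zero_le : ∀ x, x = A.zero ∨ A.lt A.zero x
  zero_lt_one : A.lt A.zero A.one
  lt_succ_self : ∀ x, A.lt x (A.add x A.one)
  discrete : ∀ x y, A.lt x y → (A.add x A.one = y ∨ A.lt (A.add x A.one) y)

/-- `A` is a model of the theory `T_tup`: the arithmetic sort satisfies `PA⁻` and the
tuple sort behaves as the sort of `N`-indexed sequences from `M`. -/
structure ModelsTtup (A : TupStr L) : Prop where
  pa : A.IsPAminus
  ind_lt : ∀ π i m, A.ind π i m → A.lt i (A.len π)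
  ind_unique : ∀ π i m m', A.ind π i m → A.ind π i m' → m = m'
  ind_total : ∀ π i, A.lt i (A.len π) → ∃ m, A.ind π i m
  ext : ∀ π ρ, A.len π = A.len ρ →
    (∀ i, A.lt i (A.len π) → ∃ m, A.ind π i m ∧ A.ind ρ i m) → π = ρ
  nil_exists : ∃ π, A.len π = A.zero
  snoc_exists : ∀ π m, ∃ ρ, A.len ρ = A.add (A.len π) A.one ∧ A.ind ρ (A.len π) m ∧
    ∀ i m', A.lt i (A.len π) → (A.ind π i m' ↔ A.ind ρ i m')
  trunc_exists : ∀ π, A.lt A.zero (A.len π) →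
    ∃ ρ, A.add (A.len ρ) A.one = A.len π ∧
      ∀ i m, A.lt i (A.len ρ) → (A.ind π i m ↔ A.ind ρ i m)

end TupStr

/-- The standard `τ*_tup`-structure `𝓜^{<ℕ}` over a `τ`-structure `M`, with standard
natural numbers, all finite tuples from `M`, a set `C ⊆ ℕ` interpreting `R`, and a
function `g` interpreting the function symbol `g`. -/
def stdTup (L : FirstOrder.Language.{0, 0}) (M : Type) (iM : L.Structure M)
    (C : Set ℕ) (g : ℕ → List M → M) : TupStr L where
  M := M
  strM := iM
  N := ℕ
  zero := 0
  one := 1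
  add := (· + ·)
  mul := (· * ·)
  lt := (· < ·)
  Tup := List M
  len := List.length
  ind := fun l i m => l[i]? = some m
  R := fun n => n ∈ C
  g := g

/-- Terms of the arithmetic sort `N`: variables, `0`, `1`, sums, products, and lengths
of tuple variables. -/
inductive NTerm : Type where
  | var : ℕ → NTerm
  | zero : NTerm
  | one : NTerm
  | add : NTerm → NTerm → NTerm
  | mul : NTerm → NTerm → NTerm
  | len : ℕ → NTerm

/-- Terms of the sort `M`: variables and applications of the function symbol `g` to an
`N`-term and a tuple variable. -/
inductive MTerm : Type where
  | var : ℕ → MTerm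
  | g : NTerm → ℕ → MTerm

variable {L : FirstOrder.Language.{0, 0}}

/-- Evaluation of `N`-terms. -/
def NTerm.eval (A : TupStr L) (vN : ℕ → A.N) (vT : ℕ → A.Tup) : NTerm → A.N
  | .var i => vN i
  | .zero => A.zero
  | .one => A.one
  | .add t u => A.add (t.eval A vN vT) (u.eval A vN vT)
  | .mul t u => A.mul (t.eval A vN vT) (u.eval A vN vT)
  | .len i => A.len (vT i)

/-- Evaluation of `M`-terms. -/
def MTerm.eval (A : TupStr L) (vM : ℕ → A.M) (vN : ℕ → A.N) (vT : ℕ → A.Tup) :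
    MTerm → A.M
  | .var i => vM i
  | .g t i => A.g (t.eval A vN vT) (vT i)

/-- Atomic `τ*_tup`-formulas. -/
inductive TAtom (L : FirstOrder.Language.{0, 0}) : Type where
  | meq : MTerm → MTerm → TAtom L
  | neq : NTerm → NTerm → TAtom L
  | nlt : NTerm → NTerm → TAtom L
  | teq : ℕ → ℕ → TAtom L
  | rel : {n : ℕ} → L.Relations n → (Fin n → MTerm) → TAtom L
  | ind : ℕ → NTerm → MTerm → TAtom L
  | R : NTerm → TAtom L

/-- Satisfaction of atomic `τ*_tup`-formulas. -/
def TAtom.Holds (A : TupStr L) (vM : ℕ → A.M) (vN : ℕ → A.N) (vT : ℕ → A.Tup) :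
    TAtom L → Prop
  | .meq t u => t.eval A vM vN vT = u.eval A vM vN vT
  | .neq t u => t.eval A vN vT = u.eval A vN vT
  | .nlt t u => A.lt (t.eval A vN vT) (u.eval A vN vT)
  | .teq i j => vT i = vT j
  | .rel r ts => @FirstOrder.Language.Structure.RelMap L A.M A.strM _ r
      (fun i => (ts i).eval A vM vN vT)
  | .ind i t s => A.ind (vT i) (t.eval A vN vT) (s.eval A vM vN vT)
  | .R t => A.R (t.eval A vN vT)

/-- Finitary quantifier-free `τ*_tup`-formulas. -/
inductive QFF (L : FirstOrder.Language.{0, 0}) : Type where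
  | fls : QFF L
  | atom : TAtom L → QFF L
  | not : QFF L → QFF L
  | and : QFF L → QFF L → QFF L
  | or : QFF L → QFF L → QFF L

/-- Satisfaction of quantifier-free `τ*_tup`-formulas. -/
def QFF.Holds (A : TupStr L) (vM : ℕ → A.M) (vN : ℕ → A.N) (vT : ℕ → A.Tup) :
    QFF L → Prop
  | .fls => False
  | .atom a => a.Holds A vM vN vT
  | .not ψ => ¬ ψ.Holds A vM vN vT
  | .and ψ χ => ψ.Holds A vM vN vT ∧ χ.Holds A vM vN vT
  | .or ψ χ => ψ.Holds A vM vN vT ∨ χ.Holds A vM vN vT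

/-- `Π₁` `τ*_tup`-formulas: built from quantifier-free formulas by arbitrary
quantification over the sort `M`, universal quantification over the sorts `N` and
`M_tup`, and bounded existential quantification over `N` and `M_tup`. -/
inductive Pi1 (L : FirstOrder.Language.{0, 0}) : Type where
  | qf : QFF L → Pi1 L
  | exM : ℕ → Pi1 L → Pi1 L
  | allM : ℕ → Pi1 L → Pi1 L
  | allN : ℕ → Pi1 L → Pi1 L
  | allT : ℕ → Pi1 L → Pi1 L
  | exNlt : ℕ → NTerm → Pi1 L → Pi1 L
  | exTlt : ℕ → NTerm → Pi1 L → Pi1 L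

/-- Satisfaction of `Π₁` `τ*_tup`-formulas. -/
def Pi1.Holds (A : TupStr L) :
    Pi1 L → (ℕ → A.M) → (ℕ → A.N) → (ℕ → A.Tup) → Prop
  | .qf ψ, vM, vN, vT => ψ.Holds A vM vN vT
  | .exM i φ, vM, vN, vT => ∃ a : A.M, φ.Holds A (Function.update vM i a) vN vT
  | .allM i φ, vM, vN, vT => ∀ a : A.M, φ.Holds A (Function.update vM i a) vN vT
  | .allN i φ, vM, vN, vT => ∀ b : A.N, φ.Holds A vM (Function.update vN i b) vT
  | .allT i φ, vM, vN, vT => ∀ π : A.Tup, φ.Holds A vM vN (Function.update vT i π)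
  | .exNlt i t φ, vM, vN, vT => ∃ b : A.N, A.lt b (t.eval A vN vT) ∧
      φ.Holds A vM (Function.update vN i b) vT
  | .exTlt i t φ, vM, vN, vT => ∃ π : A.Tup, A.lt (A.len π) (t.eval A vN vT) ∧
      φ.Holds A vM vN (Function.update vT i π)

/-- Free `N`-sort variables of an `N`-term. -/
def NTerm.fN : NTerm → Finset ℕ
  | .var i => {i}
  | .zero => ∅
  | .one => ∅
  | .add t u => t.fN ∪ u.fN
  | .mul t u => t.fN ∪ u.fN
  | .len _ => ∅

/-- Free tuple-sort variables of an `N`-term. -/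
def NTerm.fT : NTerm → Finset ℕ
  | .var _ => ∅
  | .zero => ∅
  | .one => ∅
  | .add t u => t.fT ∪ u.fT
  | .mul t u => t.fT ∪ u.fT
  | .len i => {i}

/-- Free `M`-sort variables of an `M`-term. -/
def MTerm.fM : MTerm → Finset ℕ
  | .var i => {i}
  | .g _ _ => ∅

/-- Free `N`-sort variables of an `M`-term. -/
def MTerm.fN : MTerm → Finset ℕ
  | .var _ => ∅
  | .g t _ => t.fN

/-- Free tuple-sort variables of an `M`-term. -/
def MTerm.fT : MTerm → Finset ℕ
  | .var _ => ∅
  | .g t i => insert i t.fT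

/-- Free `M`-sort variables of an atomic formula. -/
def TAtom.fM : TAtom L → Finset ℕ
  | .meq t u => t.fM ∪ u.fM
  | .neq _ _ => ∅
  | .nlt _ _ => ∅
  | .teq _ _ => ∅
  | .rel _ ts => Finset.univ.biUnion fun i => (ts i).fM
  | .ind _ _ s => s.fM
  | .R _ => ∅

/-- Free `N`-sort variables of an atomic formula. -/
def TAtom.fN : TAtom L → Finset ℕ
  | .meq t u => t.fN ∪ u.fN
  | .neq t u => t.fN ∪ u.fN
  | .nlt t u => t.fN ∪ u.fN
  | .teq _ _ => ∅
  | .rel _ ts => Finset.univ.biUnion fun i => (ts i).fN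
  | .ind _ t s => t.fN ∪ s.fN
  | .R t => t.fN

/-- Free tuple-sort variables of an atomic formula. -/
def TAtom.fT : TAtom L → Finset ℕ
  | .meq t u => t.fT ∪ u.fT
  | .neq t u => t.fT ∪ u.fT
  | .nlt t u => t.fT ∪ u.fT
  | .teq i j => {i, j}
  | .rel _ ts => Finset.univ.biUnion fun i => (ts i).fT
  | .ind i t s => insert i (t.fT ∪ s.fT)
  | .R t => t.fT

/-- Free `M`-sort variables of a quantifier-free formula. -/
def QFF.fM : QFF L → Finset ℕ
  | .fls => ∅
  | .atom a => a.fM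
  | .not ψ => ψ.fM
  | .and ψ χ => ψ.fM ∪ χ.fM
  | .or ψ χ => ψ.fM ∪ χ.fM

/-- Free `N`-sort variables of a quantifier-free formula. -/
def QFF.fN : QFF L → Finset ℕ
  | .fls => ∅
  | .atom a => a.fN
  | .not ψ => ψ.fN
  | .and ψ χ => ψ.fN ∪ χ.fN
  | .or ψ χ => ψ.fN ∪ χ.fN

/-- Free tuple-sort variables of a quantifier-free formula. -/
def QFF.fT : QFF L → Finset ℕ
  | .fls => ∅
  | .atom a => a.fT
  | .not ψ => ψ.fT
  | .and ψ χ => ψ.fT ∪ χ.fT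
  | .or ψ χ => ψ.fT ∪ χ.fT

/-- Free `M`-sort variables of a `Π₁` formula. -/
def Pi1.fM : Pi1 L → Finset ℕ
  | .qf ψ => ψ.fM
  | .exM i φ => φ.fM.erase i
  | .allM i φ => φ.fM.erase i
  | .allN _ φ => φ.fM
  | .allT _ φ => φ.fM
  | .exNlt _ _ φ => φ.fM
  | .exTlt _ _ φ => φ.fM

/-- Free `N`-sort variables of a `Π₁` formula. -/
def Pi1.fN : Pi1 L → Finset ℕ
  | .qf ψ => ψ.fN
  | .exM _ φ => φ.fN
  | .allM _ φ => φ.fN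
  | .allN i φ => φ.fN.erase i
  | .allT _ φ => φ.fN
  | .exNlt i t φ => t.fN ∪ φ.fN.erase i
  | .exTlt _ t φ => t.fN ∪ φ.fN

/-- Free tuple-sort variables of a `Π₁` formula. -/
def Pi1.fT : Pi1 L → Finset ℕ
  | .qf ψ => ψ.fT
  | .exM _ φ => φ.fT
  | .allM _ φ => φ.fT
  | .allN _ φ => φ.fT
  | .allT i φ => φ.fT.erase i
  | .exNlt _ t φ => t.fT ∪ φ.fT
  | .exTlt i t φ => t.fT ∪ φ.fT.erase i

/-- A `Π₁` sentence: a `Π₁` formula with no free variables of any sort. -/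
def Pi1.IsSentence (φ : Pi1 L) : Prop := φ.fM = ∅ ∧ φ.fN = ∅ ∧ φ.fT = ∅

/-- Satisfaction of a `Π₁` sentence (under every valuation). -/
def Pi1.Sat (A : TupStr L) (φ : Pi1 L) : Prop :=
  ∀ (vM : ℕ → A.M) (vN : ℕ → A.N) (vT : ℕ → A.Tup), φ.Holds A vM vN vT

/-- The atomic formula does not mention the relation symbol `R`. -/
def TAtom.NoR : TAtom L → Prop
  | .R _ => False
  | _ => True

/-- The quantifier-free formula does not mention the relation symbol `R`. -/
def QFF.NoR : QFF L → Prop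
  | .fls => True
  | .atom a => a.NoR
  | .not ψ => ψ.NoR
  | .and ψ χ => ψ.NoR ∧ χ.NoR
  | .or ψ χ => ψ.NoR ∧ χ.NoR

/-- The `Π₁` formula does not mention the relation symbol `R` (it is a formula of
`τ_tup ∪ {g}`). -/
def Pi1.NoR : Pi1 L → Prop
  | .qf ψ => ψ.NoR
  | .exM _ φ => φ.NoR
  | .allM _ φ => φ.NoR
  | .allN _ φ => φ.NoR
  | .allT _ φ => φ.NoR
  | .exNlt _ _ φ => φ.NoR
  | .exTlt _ _ φ => φ.NoR

/-- The canonical embedding data of `𝓜^{<ℕ}` into a `τ*_tup`-structure `A` with `M`-sort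
`A.M`: a pair of injections `ℕ → A.N` and `List A.M → A.Tup`, the identity on the sort
`M`, preserving the arithmetic structure, lengths, and the indexing relation. (The
relation `R ∩ ℕ` and the restriction of `g` on `𝓜^{<ℕ}` are by definition the pullbacks
along the embedding, so they are automatically preserved.) -/
def IsStdEmb (A : TupStr L) (e : (ℕ → A.N) × (List A.M → A.Tup)) : Prop :=
  Function.Injective e.1 ∧ Function.Injective e.2 ∧
  e.1 0 = A.zero ∧ e.1 1 = A.one ∧
  (∀ m n : ℕ, e.1 (m + n) = A.add (e.1 m) (e.1 n)) ∧
  (∀ m n : ℕ, e.1 (m * n) = A.mul (e.1 m) (e.1 n)) ∧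
  (∀ m n : ℕ, m < n ↔ A.lt (e.1 m) (e.1 n)) ∧
  (∀ l : List A.M, A.len (e.2 l) = e.1 l.length) ∧
  (∀ (l : List A.M) (i : ℕ) (m : A.M), A.ind (e.2 l) (e.1 i) m ↔ l[i]? = some m)

/-!
An existential quantifier of a `Π₁` formula over `N` or `M_tup` is bounded by a standard
number, and below a standard number everything is standard: by discreteness of `PA⁻` every
element of `N` below `e n` is some `e k` with `k < n`, and by extensionality of `T_tup` a tuple
of standard length `k` is the image of the list of its `k` entries. So the witnesses in `A`
already lie in `𝓜^{<ℕ}`; atomic formulas are preserved by the embedding, and universal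
quantifiers and quantifiers over `M` (the same sort on both sides) pass down trivially.
-/

namespace TupStr.IsPAminus

variable {A : TupStr L}

theorem not_lt_zero (pa : A.IsPAminus) (b : A.N) : ¬ A.lt b A.zero := by
  rcases pa.zero_le b with rfl | hb
  · exact pa.lt_irrefl _
  · exact fun h => pa.lt_irrefl _ (pa.lt_trans _ _ _ hb h)

theorem lt_or_eq_of_lt_succ (pa : A.IsPAminus) {b x : A.N} (h : A.lt b (A.add x A.one)) :
    A.lt b x ∨ b = x := by
  rcases pa.lt_total b x with hlt | heq | hgt
  · exact .inl hlt
  · exact .inr heq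
  · exfalso
    rcases pa.discrete _ _ hgt with hsucc | hsucc
    · exact pa.lt_irrefl _ (hsucc ▸ h)
    · exact pa.lt_irrefl _ (pa.lt_trans _ _ _ h hsucc)

end TupStr.IsPAminus

/-- The structure `(𝓜^{<ℕ}, R ∩ ℕ, g ↾ ℕ × M^{<ℕ})`, with `R` and `g` pulled back along `e`. -/
abbrev stdPullback (A : TupStr L) (e : (ℕ → A.N) × (List A.M → A.Tup)) : TupStr L :=
  stdTup L A.M A.strM {n : ℕ | A.R (e.1 n)} (fun n l => A.g (e.1 n) (e.2 l))

namespace IsStdEmb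

variable {A : TupStr L} {e : (ℕ → A.N) × (List A.M → A.Tup)}

theorem exists_eq_of_lt (pa : A.IsPAminus) (he : IsStdEmb A e) {n : ℕ} {b : A.N}
    (hb : A.lt b (e.1 n)) : ∃ k < n, e.1 k = b := by
  obtain ⟨-, -, h0, h1, hadd, -, -, -, -⟩ := he
  induction n generalizing b with
  | zero => exact absurd (h0 ▸ hb) (pa.not_lt_zero b)
  | succ n ih =>
    rw [hadd, h1] at hb
    rcases pa.lt_or_eq_of_lt_succ hb with hlt | rfl
    · obtain ⟨k, hk, rfl⟩ := ih hlt
      exact ⟨k, by omega, rfl⟩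
    · exact ⟨n, n.lt_succ_self, rfl⟩

theorem exists_eq_of_len_eq (hA : A.ModelsTtup) (he : IsStdEmb A e) {π : A.Tup} {k : ℕ}
    (hk : A.len π = e.1 k) : ∃ l : List A.M, l.length = k ∧ e.2 l = π := by
  have ⟨_, _, _, _, _, _, hlt, hlen, hind⟩ := he
  have hentry (i : Fin k) : ∃ m, A.ind π (e.1 i) m :=
    hA.ind_total _ _ (hk ▸ (hlt _ _).mp i.isLt)
  choose f hf using hentry
  refine ⟨List.ofFn f, List.length_ofFn, hA.ext _ _ (by rw [hlen, List.length_ofFn, hk]) ?_⟩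
  intro i hi
  rw [hlen, List.length_ofFn] at hi
  obtain ⟨j, hj, rfl⟩ := he.exists_eq_of_lt hA.pa hi
  exact ⟨f ⟨j, hj⟩, (hind _ _ _).mpr (by simp [hj]), hf ⟨j, hj⟩⟩

theorem exists_eq_of_len_lt (hA : A.ModelsTtup) (he : IsStdEmb A e) {π : A.Tup} {n : ℕ}
    (hπ : A.lt (A.len π) (e.1 n)) : ∃ l : List A.M, l.length < n ∧ e.2 l = π := by
  obtain ⟨k, hk, hlen⟩ := he.exists_eq_of_lt hA.pa hπ
  obtain ⟨l, rfl, rfl⟩ := he.exists_eq_of_len_eq hA hlen.symm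
  exact ⟨l, hk, rfl⟩

theorem nterm_eval (he : IsStdEmb A e) (vN : ℕ → ℕ) (vT : ℕ → List A.M) (t : NTerm) :
    t.eval A (e.1 ∘ vN) (e.2 ∘ vT) = e.1 (t.eval (stdPullback A e) vN vT) := by
  obtain ⟨-, -, h0, h1, hadd, hmul, -, hlen, -⟩ := he
  induction t with
  | var i => rfl
  | zero => exact h0.symm
  | one => exact h1.symm
  | add t u iht ihu =>
    show A.add _ _ = _
    rw [iht, ihu]
    exact (hadd _ _).symm
  | mul t u iht ihu =>
    show A.mul _ _ = _
    rw [iht, ihu]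
    exact (hmul _ _).symm
  | len i => exact hlen (vT i)

theorem mterm_eval (he : IsStdEmb A e) (vM : ℕ → A.M) (vN : ℕ → ℕ) (vT : ℕ → List A.M)
    (t : MTerm) : t.eval A vM (e.1 ∘ vN) (e.2 ∘ vT) = t.eval (stdPullback A e) vM vN vT := by
  cases t with
  | var i => rfl
  | g t i => exact congrArg (A.g · _) (he.nterm_eval vN vT t)

theorem tatom_holds_iff (he : IsStdEmb A e) (vM : ℕ → A.M) (vN : ℕ → ℕ) (vT : ℕ → List A.M)
    (a : TAtom L) :
    a.Holds A vM (e.1 ∘ vN) (e.2 ∘ vT) ↔ a.Holds (stdPullback A e) vM vN vT := by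
  have hN := he.nterm_eval vN vT
  have hM := he.mterm_eval vM vN vT
  obtain ⟨inj₁, inj₂, -, -, -, -, hlt, -, hind⟩ := he
  cases a with
  | meq t u => exact Eq.congr (hM t) (hM u)
  | neq t u =>
    show _ = _ ↔ _ = _
    rw [hN t, hN u]
    exact inj₁.eq_iff
  | nlt t u =>
    show A.lt _ _ ↔ _ < _
    rw [hN t, hN u]
    exact (hlt _ _).symm
  | teq i j => exact inj₂.eq_iff
  | rel r ts => exact iff_of_eq (congrArg _ (funext fun i => hM (ts i)))
  | ind i t s =>
    show A.ind _ _ _ ↔ _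
    rw [hN t, hM s]
    exact hind _ _ _
  | R t => exact iff_of_eq (congrArg A.R (hN t))

theorem qff_holds_iff (he : IsStdEmb A e) (vM : ℕ → A.M) (vN : ℕ → ℕ) (vT : ℕ → List A.M)
    (ψ : QFF L) :
    ψ.Holds A vM (e.1 ∘ vN) (e.2 ∘ vT) ↔ ψ.Holds (stdPullback A e) vM vN vT := by
  induction ψ with
  | fls => exact Iff.rfl
  | atom a => exact he.tatom_holds_iff vM vN vT a
  | not ψ ih => exact not_congr ih
  | and ψ χ ihψ ihχ => exact and_congr ihψ ihχ
  | or ψ χ ihψ ihχ => exact or_congr ihψ ihχ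

end IsStdEmb

/-- Let `A` be a `τ*_tup`-structure which is a model of `T_tup` whose
`M`-sort equals the `τ`-structure `𝓜 = A.M`, and identify `𝓜^{<ℕ}` with its canonical
image in `A` (given by an embedding `e`). Let `φ` be a `Π₁` `τ*_tup`-formula and let the
parameters (valuations) come from `𝓜^{<ℕ}`. If `A ⊨ φ` at these parameters, then
`(𝓜^{<ℕ}, R ∩ ℕ, g ↾ ℕ × M^{<ℕ}) ⊨ φ` at the same parameters. -/
theorem pi1_reflects_to_std {L : FirstOrder.Language.{0, 0}}
    (A : TupStr L) (hA : A.ModelsTtup)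
    (e : (ℕ → A.N) × (List A.M → A.Tup)) (he : IsStdEmb A e)
    (φ : Pi1 L) (vM : ℕ → A.M) (vN : ℕ → ℕ) (vT : ℕ → List A.M)
    (h : φ.Holds A vM (fun i => e.1 (vN i)) (fun i => e.2 (vT i))) :
    φ.Holds (stdTup L A.M A.strM {n : ℕ | A.R (e.1 n)} (fun n l => A.g (e.1 n) (e.2 l)))
      vM vN vT := by
  change φ.Holds A vM (e.1 ∘ vN) (e.2 ∘ vT) at h
  induction φ generalizing vM vN vT with
  | qf ψ => exact (he.qff_holds_iff vM vN vT ψ).mp h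
  | exM i φ ih =>
    obtain ⟨a, ha⟩ := h
    exact ⟨a, ih _ _ _ ha⟩
  | allM i φ ih => exact fun a => ih _ _ _ (h a)
  | allN i φ ih =>
    intro b
    exact ih _ _ _ (Function.comp_update e.1 vN i b ▸ h (e.1 b))
  | allT i φ ih =>
    intro l
    exact ih _ _ _ (Function.comp_update e.2 vT i l ▸ h (e.2 l))
  | exNlt i t φ ih =>
    obtain ⟨b, hb, hφ⟩ := h
    rw [he.nterm_eval] at hb
    obtain ⟨k, hk, rfl⟩ := he.exists_eq_of_lt hA.pa hb
    exact ⟨k, hk, ih _ _ _ (Function.comp_update e.1 vN i k ▸ hφ)⟩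
  | exTlt i t φ ih =>
    obtain ⟨π, hπ, hφ⟩ := h
    rw [he.nterm_eval] at hπ
    obtain ⟨l, hl, rfl⟩ := he.exists_eq_of_len_lt hA hπ
    exact ⟨l, hl, ih _ _ _ (Function.comp_update e.2 vT i l ▸ hφ)⟩

end PaperCDH
end
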